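/- arXiv:1909.10406 — 4 statements merged into one kernel-verified Lean document; each statement's English description precedes it below -/
import Mathlib

section
/- Let G be a graph and c an induced claw unit of G with edge set {x,y,z}, where all three edges are incident to a common vertex v of degree 3. Then the following three sets are in pairwise bijection: (i) the set of 2-matchings of G∖c (the graph obtained by deleting v and its incident edges), (ii) the set of 2-matchings of G containing both y and z, and (iii) the set of 2-matchings of G containing x but neither y nor z. The bijections are m ↦ m ∪ {y,z} and m ↦ m ∪ {x}. -/
noncomputable section

/-- An abstract simplicial complex on vertex type `V` (faces include `∅`). -/
structure AbsSC (V : Type*) where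
  faces : Set (Finset V)
  down_closed : ∀ ⦃σ τ : Finset V⦄, σ ∈ faces → τ ⊆ σ → τ ∈ faces

/-- Geometric realization of an abstract simplicial complex on a finite vertex set. -/
def realization {V : Type*} [Fintype V] (K : AbsSC V) : Type _ :=
  {f : V → ℝ // (∀ v, 0 ≤ f v) ∧ (∑ v, f v) = 1 ∧ ∃ σ ∈ K.faces, ∀ v, f v ≠ 0 → v ∈ σ}

instance {V : Type*} [Fintype V] (K : AbsSC V) : TopologicalSpace (realization K) := by
  unfold realization; infer_instance

/-- The `n`-sphere. -/
def sphereSpace (n : ℕ) : Type := Metric.sphere (0 : EuclideanSpace ℝ (Fin (n+1))) 1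

instance (n : ℕ) : TopologicalSpace (sphereSpace n) := by
  unfold sphereSpace; infer_instance

/-- A base point on the `n`-sphere. -/
def basept (n : ℕ) : sphereSpace n :=
  ⟨EuclideanSpace.single 0 1, by
    simp [sphereSpace, EuclideanSpace.norm_single]⟩

/-- A wedge of `k` copies of the `n`-sphere (one-point union at the base points). -/
def wedgeSpheres (k n : ℕ) : Type :=
  Quot (fun a b : (Σ _ : Fin k, sphereSpace n) ⊕ Unit =>
    b = Sum.inr () ∧ ∃ i : Fin k, a = Sum.inl ⟨i, basept n⟩)

instance (k n : ℕ) : TopologicalSpace (wedgeSpheres k n) := by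
  unfold wedgeSpheres; infer_instance

/-- `H` is a 2-matching of `G`: a set of edges of `G` such that every vertex is
incident to at most 2 of them. -/
def IsTwoMatching {V : Type*} [DecidableEq V] (G : SimpleGraph V) (H : Finset (Sym2 V)) : Prop :=
  ↑H ⊆ G.edgeSet ∧ ∀ v : V, (H.filter (fun e => v ∈ e)).card ≤ 2

/-- `H` is a matching of `G`. -/
def IsMatchingSet {V : Type*} [DecidableEq V] (G : SimpleGraph V) (H : Finset (Sym2 V)) : Prop :=
  ↑H ⊆ G.edgeSet ∧ ∀ v : V, (H.filter (fun e => v ∈ e)).card ≤ 1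

/-- The 2-matching complex `M₂(G)`. -/
def M2 {V : Type*} [DecidableEq V] (G : SimpleGraph V) : AbsSC (Sym2 V) where
  faces := {H | IsTwoMatching G H}
  down_closed := by
    intro σ τ hσ hτ
    exact ⟨fun e he => hσ.1 (hτ he), fun v =>
      le_trans (Finset.card_le_card (Finset.filter_subset_filter _ hτ)) (hσ.2 v)⟩

/-- The matching complex `M₁(G)`. -/
def M1 {V : Type*} [DecidableEq V] (G : SimpleGraph V) : AbsSC (Sym2 V) where
  faces := {H | IsMatchingSet G H}
  down_closed := by
    intro σ τ hσ hτ
    exact ⟨fun e he => hσ.1 (hτ he), fun v =>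
      le_trans (Finset.card_le_card (Finset.filter_subset_filter _ hτ)) (hσ.2 v)⟩

/-- The independence complex of a graph. -/
def IndC {V : Type*} (G : SimpleGraph V) : AbsSC V where
  faces := {S | ∀ a ∈ S, ∀ b ∈ S, ¬ G.Adj a b}
  down_closed := by
    intro σ τ hσ hτ a ha b hb
    exact hσ a (hτ ha) b (hτ hb)



lemma stmt2_filter_card_le_degree {V : Type*} [Fintype V] [DecidableEq V] (G : SimpleGraph V)
    [DecidableRel G.Adj] (H : Finset (Sym2 V)) (hH : ↑H ⊆ G.edgeSet) (w : V) :
    (H.filter (fun e => w ∈ e)).card ≤ G.degree w := by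
  rw [← G.card_incidenceFinset_eq_degree w]
  apply Finset.card_le_card
  intro e he
  rw [Finset.mem_filter] at he
  rw [SimpleGraph.mem_incidenceFinset]
  exact ⟨hH he.1, he.2⟩

/-- for an induced claw unit with edges `{x,y,z}` at a degree-3 vertex `v`,
the 2-matchings of `G∖c` are in bijection (via `m ↦ m ∪ {y,z}` and `m ↦ m ∪ {x}`) with
the 2-matchings of `G` containing both `y` and `z`, and with those containing `x` but
neither `y` nor `z`. -/
theorem stmt_2 {V : Type*} [Fintype V] [DecidableEq V] (G : SimpleGraph V)
    [DecidableRel G.Adj] (v : V) (x y z : Sym2 V)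
    (hxy : x ≠ y) (hyz : y ≠ z) (hxz : x ≠ z)
    (hinc : G.incidenceSet v = {x, y, z}) (hdeg : G.degree v = 3)
    (hother : ∀ w, w ≠ v → (w ∈ x ∨ w ∈ y ∨ w ∈ z) → G.degree w ≤ 2) :
    Set.BijOn (fun m => insert y (insert z m))
      {m : Finset (Sym2 V) | IsTwoMatching (G.deleteEdges (G.incidenceSet v)) m}
      {m | IsTwoMatching G m ∧ y ∈ m ∧ z ∈ m} ∧
    Set.BijOn (fun m => insert x m)
      {m : Finset (Sym2 V) | IsTwoMatching (G.deleteEdges (G.incidenceSet v)) m}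
      {m | IsTwoMatching G m ∧ x ∈ m ∧ y ∉ m ∧ z ∉ m} := by
  classical
  set G' := G.deleteEdges (G.incidenceSet v) with hG'
  have hxI : x ∈ G.incidenceSet v := by rw [hinc]; simp
  have hyI : y ∈ G.incidenceSet v := by rw [hinc]; simp
  have hzI : z ∈ G.incidenceSet v := by rw [hinc]; simp
  have hxE : x ∈ G.edgeSet := hxI.1
  have hyE : y ∈ G.edgeSet := hyI.1
  have hzE : z ∈ G.edgeSet := hzI.1
  have hvx : v ∈ x := hxI.2
  have hvy : v ∈ y := hyI.2
  have hvz : v ∈ z := hzI.2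
  -- edges of a 2-matching of G' avoid v
  have hnv : ∀ m : Finset (Sym2 V), IsTwoMatching G' m → ∀ e ∈ m, v ∉ e := by
    intro m hm e he hve
    have h1 := hm.1 he
    rw [hG', SimpleGraph.edgeSet_deleteEdges] at h1
    exact h1.2 ⟨h1.1, hve⟩
  have hsubE : ∀ m : Finset (Sym2 V), IsTwoMatching G' m → (↑m : Set (Sym2 V)) ⊆ G.edgeSet := by
    intro m hm e he
    have h1 := hm.1 he
    rw [hG', SimpleGraph.edgeSet_deleteEdges] at h1
    exact h1.1
  -- membership in a 2-matching of G' for a finset of G-edges avoiding v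
  have hmk : ∀ m : Finset (Sym2 V), (↑m : Set (Sym2 V)) ⊆ G.edgeSet → (∀ e ∈ m, v ∉ e) →
      (∀ w, (m.filter (fun e => w ∈ e)).card ≤ 2) → IsTwoMatching G' m := by
    intro m hE hv hc
    refine ⟨?_, hc⟩
    intro e he
    rw [hG', SimpleGraph.edgeSet_deleteEdges]
    exact ⟨hE he, fun hi => hv e he hi.2⟩
  constructor
  · -- first bijection
    refine ⟨?_, ?_, ?_⟩
    · -- MapsTo
      intro m hm
      have hsub : (↑(insert y (insert z m)) : Set (Sym2 V)) ⊆ G.edgeSet := by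
        intro e he
        simp only [Finset.coe_insert, Set.mem_insert_iff, Finset.mem_coe] at he
        rcases he with rfl | rfl | he
        · exact hyE
        · exact hzE
        · exact hsubE m hm he
      refine ⟨⟨hsub, ?_⟩, by simp, by simp⟩
      intro w
      by_cases hw : w = v
      · subst hw
        have hfil : (insert y (insert z m)).filter (fun e => w ∈ e) = {y, z} := by
          ext e
          simp only [Finset.mem_filter, Finset.mem_insert, Finset.mem_singleton]
          constructor
          · rintro ⟨rfl | rfl | hem, hwe⟩
            · exact Or.inl rfl
            · exact Or.inr rfl
            · exact absurd hwe (hnv m hm e hem)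
          · rintro (rfl | rfl)
            · exact ⟨Or.inl rfl, hvy⟩
            · exact ⟨Or.inr (Or.inl rfl), hvz⟩
        rw [hfil, Finset.card_pair hyz]
      · by_cases hwyz : w ∈ y ∨ w ∈ z
        · calc ((insert y (insert z m)).filter (fun e => w ∈ e)).card
              ≤ G.degree w := stmt2_filter_card_le_degree G _ hsub w
            _ ≤ 2 := hother w hw (Or.inr hwyz)
        · push_neg at hwyz
          rw [Finset.filter_insert, if_neg hwyz.1, Finset.filter_insert, if_neg hwyz.2]
          exact hm.2 w
    · -- InjOn
      intro m1 h1 m2 h2 heq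
      simp only at heq
      have key : ∀ m : Finset (Sym2 V), IsTwoMatching G' m →
          ((insert y (insert z m)).erase y).erase z = m := by
        intro m hm
        have hym : y ∉ insert z m := by
          simp only [Finset.mem_insert]
          rintro (rfl | hym)
          · exact hyz rfl
          · exact hnv m hm y hym hvy
        rw [Finset.erase_insert hym, Finset.erase_insert (fun h => hnv m hm z h hvz)]
      rw [← key m1 h1, ← key m2 h2, heq]
    · -- SurjOn
      intro n hn
      obtain ⟨hn2, hyn, hzn⟩ := hn
      refine ⟨(n.erase y).erase z, ?_, ?_⟩
      · have hsubn : (n.erase y).erase z ⊆ n :=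
          (Finset.erase_subset _ _).trans (Finset.erase_subset _ _)
        refine hmk _ (fun e he => hn2.1 (hsubn he)) ?_ ?_
        · intro e he hve
          have hen : e ∈ n := hsubn he
          have heI : e ∈ G.incidenceSet v := ⟨hn2.1 hen, hve⟩
          rw [hinc] at heI
          rcases heI with rfl | rfl | rfl
          · -- e = x : then x,y,z all in n, contradicting degree bound at v
            have h3 : ({e, y, z} : Finset (Sym2 V)) ⊆ n.filter (fun e => v ∈ e) := by
              intro a ha
              simp only [Finset.mem_insert, Finset.mem_singleton] at ha
              rw [Finset.mem_filter]
              rcases ha with rfl | rfl | rfl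
              · exact ⟨hen, hvx⟩
              · exact ⟨hyn, hvy⟩
              · exact ⟨hzn, hvz⟩
            have hc3 : ({e, y, z} : Finset (Sym2 V)).card = 3 := by
              rw [Finset.card_insert_of_notMem (by simp [hxy, hxz]), Finset.card_pair hyz]
            have := (hc3 ▸ Finset.card_le_card h3).trans (hn2.2 v)
            omega
          · exact (Finset.mem_erase.mp (Finset.mem_of_mem_erase he)).1 rfl
          · exact (Finset.mem_erase.mp he).1 rfl
        · intro w
          exact le_trans (Finset.card_le_card (Finset.filter_subset_filter _ hsubn)) (hn2.2 w)
      · simp only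
        have hz' : z ∈ n.erase y := Finset.mem_erase.mpr ⟨fun h => hyz h.symm, hzn⟩
        rw [Finset.insert_erase hz', Finset.insert_erase hyn]
  · -- second bijection
    refine ⟨?_, ?_, ?_⟩
    · -- MapsTo
      intro m hm
      have hsub : (↑(insert x m) : Set (Sym2 V)) ⊆ G.edgeSet := by
        intro e he
        simp only [Finset.coe_insert, Set.mem_insert_iff, Finset.mem_coe] at he
        rcases he with rfl | he
        · exact hxE
        · exact hsubE m hm he
      refine ⟨⟨hsub, ?_⟩, by simp, ?_, ?_⟩
      · intro w
        by_cases hw : w = v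
        · subst hw
          have hfil : (insert x m).filter (fun e => w ∈ e) = {x} := by
            ext e
            simp only [Finset.mem_filter, Finset.mem_insert, Finset.mem_singleton]
            constructor
            · rintro ⟨rfl | hem, hwe⟩
              · rfl
              · exact absurd hwe (hnv m hm e hem)
            · rintro rfl
              exact ⟨Or.inl rfl, hvx⟩
          rw [hfil, Finset.card_singleton]
          omega
        · by_cases hwx : w ∈ x
          · calc ((insert x m).filter (fun e => w ∈ e)).card
                ≤ G.degree w := stmt2_filter_card_le_degree G _ hsub w
              _ ≤ 2 := hother w hw (Or.inl hwx)
          · rw [Finset.filter_insert, if_neg hwx]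
            exact hm.2 w
      · simp only [Finset.mem_insert]
        rintro (rfl | hym)
        · exact hxy rfl
        · exact hnv m hm y hym hvy
      · simp only [Finset.mem_insert]
        rintro (rfl | hzm)
        · exact hxz rfl
        · exact hnv m hm z hzm hvz
    · -- InjOn
      intro m1 h1 m2 h2 heq
      simp only at heq
      have key : ∀ m : Finset (Sym2 V), IsTwoMatching G' m → (insert x m).erase x = m := by
        intro m hm
        exact Finset.erase_insert (fun h => hnv m hm x h hvx)
      rw [← key m1 h1, ← key m2 h2, heq]
    · -- SurjOn
      intro n hn
      obtain ⟨hn2, hxn, hyn, hzn⟩ := hn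
      refine ⟨n.erase x, ?_, ?_⟩
      · have hsubn : n.erase x ⊆ n := Finset.erase_subset _ _
        refine hmk _ (fun e he => hn2.1 (hsubn he)) ?_ ?_
        · intro e he hve
          have hen : e ∈ n := hsubn he
          have heI : e ∈ G.incidenceSet v := ⟨hn2.1 hen, hve⟩
          rw [hinc] at heI
          rcases heI with rfl | rfl | rfl
          · exact (Finset.mem_erase.mp he).1 rfl
          · exact hyn hen
          · exact hzn hen
        · intro w
          exact le_trans (Finset.card_le_card (Finset.filter_subset_filter _ hsubn)) (hn2.2 w)
      · simp only
        rw [Finset.insert_erase hxn]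

end
end

section
/- Let G and H be disjoint graphs with leaves v₁ ∈ V(G) and v₂ ∈ V(H), and let G ∨ H be the wedge obtained by identifying v₁ with v₂. Then a set of edges is a 2-matching of G ∨ H if and only if it is the union of a 2-matching of G and a 2-matching of H. Consequently M₂(G ∨ H) equals the simplicial join M₂(G) ∗ M₂(H). -/
noncomputable section

lemma mem_support_of_edge {V : Type*} (G : SimpleGraph V) {e : Sym2 V} (he : e ∈ G.edgeSet)
    {w : V} (hw : w ∈ e) : w ∈ G.support := by
  induction e with
  | h a b =>
    rw [Sym2.mem_iff] at hw
    rw [SimpleGraph.mem_edgeSet] at he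
    rcases hw with rfl | rfl
    · exact ⟨b, he⟩
    · exact ⟨a, he.symm⟩

lemma filter_card_le_deg {V : Type*} [Fintype V] [DecidableEq V] (G : SimpleGraph V)
    [DecidableRel G.Adj] (v : V) (A : Finset (Sym2 V)) (hA : ↑A ⊆ G.edgeSet) :
    (A.filter (fun e => v ∈ e)).card ≤ G.degree v := by
  rw [← SimpleGraph.card_incidenceFinset_eq_degree]
  apply Finset.card_le_card
  intro e he
  rw [Finset.mem_filter] at he
  rw [SimpleGraph.mem_incidenceFinset]
  exact ⟨hA he.1, he.2⟩

/-- for graphs `G`, `H` meeting only in a common vertex `v` which is a leaf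
of both, the 2-matchings of the wedge `G ∨ H` are exactly the unions of a 2-matching of
`G` and a 2-matching of `H`; hence `M₂(G ∨ H)` is the simplicial join `M₂(G) ∗ M₂(H)`. -/
theorem stmt_4 {V : Type*} [Fintype V] [DecidableEq V] (G H : SimpleGraph V)
    [DecidableRel G.Adj] [DecidableRel H.Adj] (v : V)
    (hdisj : Disjoint G.edgeSet H.edgeSet)
    (hsupp : G.support ∩ H.support = {v})
    (hG : G.degree v = 1) (hH : H.degree v = 1) :
    (∀ M : Finset (Sym2 V), IsTwoMatching (G ⊔ H) M ↔
      ∃ A B : Finset (Sym2 V), IsTwoMatching G A ∧ IsTwoMatching H B ∧ M = A ∪ B) ∧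
    (M2 (G ⊔ H)).faces =
      {m | ∃ σ ∈ (M2 G).faces, ∃ τ ∈ (M2 H).faces, m = σ ∪ τ} := by
  classical
  have hsplit : ∀ M : Finset (Sym2 V), IsTwoMatching (G ⊔ H) M ↔
      ∃ A B : Finset (Sym2 V), IsTwoMatching G A ∧ IsTwoMatching H B ∧ M = A ∪ B := by
    intro M
    constructor
    · intro hM
      refine ⟨M.filter (fun e => e ∈ G.edgeSet), M.filter (fun e => e ∈ H.edgeSet),
        ⟨?_, ?_⟩, ⟨?_, ?_⟩, ?_⟩
      · intro e he
        simp only [Finset.coe_filter, Set.mem_setOf_eq] at he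
        exact he.2
      · intro w
        exact le_trans (Finset.card_le_card
          (Finset.filter_subset_filter _ (Finset.filter_subset _ _))) (hM.2 w)
      · intro e he
        simp only [Finset.coe_filter, Set.mem_setOf_eq] at he
        exact he.2
      · intro w
        exact le_trans (Finset.card_le_card
          (Finset.filter_subset_filter _ (Finset.filter_subset _ _))) (hM.2 w)
      · ext e
        simp only [Finset.mem_union, Finset.mem_filter]
        constructor
        · intro he
          have := hM.1 he
          rw [SimpleGraph.edgeSet_sup] at this
          rcases this with h | h
          · exact Or.inl ⟨he, h⟩
          · exact Or.inr ⟨he, h⟩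
        · rintro (⟨he, _⟩ | ⟨he, _⟩) <;> exact he
    · rintro ⟨A, B, hA, hB, rfl⟩
      constructor
      · rw [SimpleGraph.edgeSet_sup, Finset.coe_union]
        exact Set.union_subset_union hA.1 hB.1
      · intro w
        rw [Finset.filter_union]
        refine le_trans (Finset.card_union_le _ _) ?_
        by_cases hwG : w ∈ G.support
        · by_cases hwH : w ∈ H.support
          · have hwv : w = v := by
              have : w ∈ G.support ∩ H.support := ⟨hwG, hwH⟩
              rw [hsupp] at this
              exact this
            subst hwv
            have h1 := filter_card_le_deg G w A hA.1
            have h2 := filter_card_le_deg H w B hB.1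
            omega
          · have hBe : B.filter (fun e => w ∈ e) = ∅ := by
              rw [Finset.filter_eq_empty_iff]
              intro e he hw
              exact hwH (mem_support_of_edge H (hB.1 he) hw)
            rw [hBe]
            simpa using hA.2 w
        · have hAe : A.filter (fun e => w ∈ e) = ∅ := by
            rw [Finset.filter_eq_empty_iff]
            intro e he hw
            exact hwG (mem_support_of_edge G (hA.1 he) hw)
          rw [hAe]
          simpa using hB.2 w
  refine ⟨hsplit, ?_⟩
  ext m
  simp only [M2, Set.mem_setOf_eq]
  rw [hsplit m]
  constructor
  · rintro ⟨A, B, h1, h2, h3⟩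
    exact ⟨A, h1, B, h2, h3⟩
  · rintro ⟨A, h1, B, h2, h3⟩
    exact ⟨A, B, h1, h2, h3⟩


end
end

section
/- For n ≥ 0, the 2-matching complex of the clawed path CP_n (the clawed graph of the path of length n) is homotopy equivalent to the sphere S^{2n+1}. In particular, CP_n decomposes as a wedge (vertex-identification) of n+1 copies of K_{1,3}, and M₂(CP_n) is the (n+1)-fold join of copies of M₂(K_{1,3}) ≃ S¹. -/
noncomputable section

/-- The clawed path `CP_n`: `n+1` claws `K_{1,3}` glued consecutively at leaves.
Vertices: `inl i` are the `n+1` claw centers, `inr (inl i)` are the top leaves,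
and `inr (inr j)` (for `j : Fin (n+2)`) are the in-between vertices; center `i`
is adjacent to its top leaf and to the in-between vertices `i` and `i+1`. -/
def clawedPath (n : ℕ) : SimpleGraph (Fin (n + 1) ⊕ Fin (n + 1) ⊕ Fin (n + 2)) :=
  SimpleGraph.fromRel (fun a b =>
    match a, b with
    | Sum.inl i, Sum.inr (Sum.inl j) => i = j
    | Sum.inl i, Sum.inr (Sum.inr j) => (j : ℕ) = (i : ℕ) ∨ (j : ℕ) = (i : ℕ) + 1
    | _, _ => False)

/-!
A vertex of `CP_n` other than a claw centre has degree at most 2, so a set of edges is a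
2-matching iff it omits an edge of every claw: `M₂(CP_n)` is the join of `n + 1` copies of the
boundary of a triangle. For a join of simplex boundaries on the blocks `{i} × Option κ`, a point
`f` of the realization vanishes somewhere on each block, so it is recovered from the differences
`f (i, some k) - f (i, none)` by subtracting their blockwise minimum. These differences identify
the realization with the level set `{mass = 1}` of a continuous, positively homogeneous function
on `ℝ^(ι × κ)` that is positive off the origin, and radial projection carries that level set
homeomorphically onto the unit sphere, here of dimension `2 (n + 1) - 1`.
-/

namespace AbsSC

variable {V W : Type*} [Fintype V] {K : AbsSC V} {e : W ↪ V}

lemma realization_apply_eq_zero_of_notMem_range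
    (h_range : ∀ σ ∈ K.faces, ∀ v ∈ σ, v ∈ Set.range e) (f : realization K) {v : V}
    (hv : v ∉ Set.range e) : f.1 v = 0 := by
  obtain ⟨σ, hσ, hsupp⟩ := f.2.2.2
  by_contra hfv
  exact hv (h_range σ hσ v (hsupp v hfv))

variable [Fintype W] {L : AbsSC W}

def realizationComap (h_range : ∀ σ ∈ K.faces, ∀ v ∈ σ, v ∈ Set.range e)
    (h_faces : ∀ τ : Finset W, τ.map e ∈ K.faces → τ ∈ L.faces) (f : realization K) :
    realization L :=
  ⟨f.1 ∘ e, fun w => f.2.1 (e w),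
    (Fintype.sum_of_injective e e.injective _ _
      (fun _ hv => realization_apply_eq_zero_of_notMem_range h_range f hv) fun _ => rfl).trans
      f.2.2.1,
    by
      classical
      obtain ⟨σ, hσ, hsupp⟩ := f.2.2.2
      refine ⟨Finset.univ.filter fun w => f.1 (e w) ≠ 0, h_faces _ ?_, fun w hw => ?_⟩
      · refine K.down_closed hσ fun v hv => ?_
        obtain ⟨w, hw, rfl⟩ := Finset.mem_map.1 hv
        exact hsupp _ (Finset.mem_filter.1 hw).2
      · exact Finset.mem_filter.2 ⟨Finset.mem_univ w, hw⟩⟩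

def realizationExtend (h_faces : ∀ τ ∈ L.faces, τ.map e ∈ K.faces) (g : realization L) :
    realization K :=
  ⟨Function.extend e g.1 0,
    fun v => by
      by_cases hv : v ∈ Set.range e
      · obtain ⟨w, rfl⟩ := hv
        rw [e.injective.extend_apply]
        exact g.2.1 w
      · rw [Function.extend_apply' _ _ _ hv]
        rfl,
    (Fintype.sum_of_injective e e.injective g.1 _
      (fun v hv => Function.extend_apply' (f := e) g.1 0 v hv)
      fun w => (e.injective.extend_apply g.1 0 w).symm).symm.trans g.2.2.1,
    by
      obtain ⟨τ, hτ, hsupp⟩ := g.2.2.2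
      refine ⟨τ.map e, h_faces τ hτ, fun v hv => ?_⟩
      by_cases hv' : v ∈ Set.range e
      · obtain ⟨w, rfl⟩ := hv'
        rw [e.injective.extend_apply] at hv
        exact Finset.mem_map_of_mem e (hsupp w hv)
      · exact absurd (Function.extend_apply' _ _ _ hv') hv⟩

def realizationHomeomorphOfEmbedding (K : AbsSC V) (L : AbsSC W) (e : W ↪ V)
    (h_range : ∀ σ ∈ K.faces, ∀ v ∈ σ, v ∈ Set.range e)
    (h_faces : ∀ τ : Finset W, τ.map e ∈ K.faces ↔ τ ∈ L.faces) :
    realization K ≃ₜ realization L where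
  toFun := realizationComap h_range fun τ => (h_faces τ).1
  invFun := realizationExtend fun τ => (h_faces τ).2
  left_inv f := Subtype.ext <| funext fun v => by
    show Function.extend e (f.1 ∘ e) 0 v = f.1 v
    by_cases hv : v ∈ Set.range e
    · obtain ⟨w, rfl⟩ := hv
      exact e.injective.extend_apply _ _ w
    · rw [Function.extend_apply' _ _ _ hv]
      exact (realization_apply_eq_zero_of_notMem_range h_range f hv).symm
  right_inv g := Subtype.ext <| funext fun w => e.injective.extend_apply g.1 0 w
  continuous_toFun := by
    refine Continuous.subtype_mk (continuous_pi fun w => ?_) _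
    exact (continuous_apply (e w)).comp continuous_subtype_val
  continuous_invFun := by
    refine Continuous.subtype_mk (continuous_pi fun v => ?_) _
    by_cases hv : v ∈ Set.range e
    · obtain ⟨w, rfl⟩ := hv
      simp_rw [e.injective.extend_apply]
      exact (continuous_apply w).comp continuous_subtype_val
    · simp_rw [Function.extend_apply' _ _ _ hv]
      exact continuous_const

end AbsSC

def homeomorphSphereOfPosHomogeneous {E : Type*} [NormedAddCommGroup E] [NormedSpace ℝ E]
    (N : E → ℝ) (hN : Continuous N) (h_smul : ∀ t : ℝ, 0 ≤ t → ∀ z, N (t • z) = t * N z)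
    (h_pos : ∀ z, z ≠ 0 → 0 < N z) :
    {z : E // N z = 1} ≃ₜ Metric.sphere (0 : E) 1 :=
  have ne_zero_of_level (z : {z : E // N z = 1}) : (z : E) ≠ 0 := by
    rintro h
    have := z.2
    rw [h, ← zero_smul ℝ (0 : E), h_smul 0 le_rfl, zero_mul] at this
    exact zero_ne_one this
  have ne_zero_of_sphere (z : Metric.sphere (0 : E) 1) : (z : E) ≠ 0 :=
    ne_zero_of_mem_unit_sphere z
  { toFun z := ⟨‖(z : E)‖⁻¹ • (z : E), by
      rw [mem_sphere_zero_iff_norm]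
      exact norm_smul_inv_norm (ne_zero_of_level z)⟩
    invFun z := ⟨(N z)⁻¹ • (z : E), by
      rw [h_smul _ (inv_nonneg.2 (h_pos _ (ne_zero_of_sphere z)).le),
        inv_mul_cancel₀ (h_pos _ (ne_zero_of_sphere z)).ne']⟩
    left_inv z := by
      have hz := ne_zero_of_level z
      ext1
      dsimp only
      rw [h_smul _ (inv_nonneg.2 (norm_nonneg _)), z.2, mul_one, inv_inv, smul_smul,
        mul_inv_cancel₀ (norm_ne_zero_iff.2 hz), one_smul]
    right_inv z := by
      have hpos := h_pos _ (ne_zero_of_sphere z)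
      ext1
      dsimp only
      rw [norm_smul, norm_inv, Real.norm_eq_abs, abs_of_pos hpos, norm_eq_of_mem_sphere z,
        mul_one, inv_inv, smul_smul, mul_inv_cancel₀ hpos.ne', one_smul]
    continuous_toFun := by
      refine Continuous.subtype_mk ?_ _
      exact (continuous_subtype_val.norm.inv₀ fun z => norm_ne_zero_iff.2 (ne_zero_of_level z)).smul
        continuous_subtype_val
    continuous_invFun := by
      refine Continuous.subtype_mk ?_ _
      exact ((hN.comp continuous_subtype_val).inv₀ fun z =>
        (h_pos _ (ne_zero_of_sphere z)).ne').smul continuous_subtype_val }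

def EuclideanSpace.sphereHomeomorphOfEquiv {α β : Type*} [Fintype α] [Fintype β] (e : α ≃ β) :
    Metric.sphere (0 : EuclideanSpace ℝ α) 1 ≃ₜ Metric.sphere (0 : EuclideanSpace ℝ β) 1 :=
  (LinearIsometryEquiv.piLpCongrLeft 2 ℝ ℝ e).toHomeomorph.subtype fun _ => by simp

/-- The join over `ι` of copies of the boundary of the simplex on `κ`. -/
def simplexBoundaryJoin (ι κ : Type*) : AbsSC (ι × κ) where
  faces := {σ | ∀ i, ∃ k, (i, k) ∉ σ}
  down_closed _ _ hσ hτ i := (hσ i).imp fun _ hk h => hk (hτ h)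

lemma exists_face_simplexBoundaryJoin_iff {ι κ : Type*} [Fintype ι] [Fintype κ]
    (f : ι × κ → ℝ) :
    (∃ σ ∈ (simplexBoundaryJoin ι κ).faces, ∀ p, f p ≠ 0 → p ∈ σ) ↔ ∀ i, ∃ k, f (i, k) = 0 := by
  classical
  constructor
  · rintro ⟨σ, hσ, hsupp⟩ i
    obtain ⟨k, hk⟩ := hσ i
    exact ⟨k, not_not.1 (mt (hsupp _) hk)⟩
  · intro h
    refine ⟨Finset.univ.filter fun p => f p ≠ 0, fun i => ?_, fun p hp => by simpa using hp⟩
    obtain ⟨k, hk⟩ := h i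
    exact ⟨k, by simpa using hk⟩

namespace SimplexBoundaryJoin

open Finset

variable {ι κ : Type*}

def relCoords (f : ι × Option κ → ℝ) : EuclideanSpace ℝ (ι × κ) :=
  WithLp.toLp 2 fun p => f (p.1, some p.2) - f (p.1, none)

def extendNone (z : EuclideanSpace ℝ (ι × κ)) (p : ι × Option κ) : ℝ :=
  p.2.elim 0 fun k => z (p.1, k)

lemma extendNone_relCoords (f : ι × Option κ → ℝ) (p : ι × Option κ) :
    extendNone (relCoords f) p = f p - f (p.1, none) := by
  obtain ⟨i, _ | k⟩ := p
  · simp [extendNone]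
  · rfl

lemma continuous_relCoords : Continuous (relCoords : (ι × Option κ → ℝ) → _) :=
  (PiLp.continuous_toLp 2 _).comp <| continuous_pi fun _ =>
    (continuous_apply _).sub (continuous_apply _)

lemma continuous_extendNone (p : ι × Option κ) :
    Continuous fun z : EuclideanSpace ℝ (ι × κ) => extendNone z p := by
  obtain ⟨i, _ | k⟩ := p
  · exact continuous_const
  · exact (continuous_apply (i, k)).comp (PiLp.continuous_ofLp 2 _)

variable [Fintype κ]

def blockMin (z : EuclideanSpace ℝ (ι × κ)) (i : ι) : ℝ :=
  univ.inf' univ_nonempty fun o => extendNone z (i, o)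

def ofRelCoords (z : EuclideanSpace ℝ (ι × κ)) (p : ι × Option κ) : ℝ :=
  extendNone z p - blockMin z p.1

lemma blockMin_le (z : EuclideanSpace ℝ (ι × κ)) (i : ι) (o : Option κ) :
    blockMin z i ≤ extendNone z (i, o) :=
  inf'_le _ (mem_univ o)

lemma ofRelCoords_nonneg (z : EuclideanSpace ℝ (ι × κ)) (p : ι × Option κ) :
    0 ≤ ofRelCoords z p :=
  sub_nonneg.2 (blockMin_le z p.1 p.2)

lemma exists_ofRelCoords_eq_zero (z : EuclideanSpace ℝ (ι × κ)) (i : ι) :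
    ∃ o, ofRelCoords z (i, o) = 0 := by
  obtain ⟨o, -, ho⟩ := exists_mem_eq_inf' univ_nonempty fun o => extendNone z (i, o)
  exact ⟨o, sub_eq_zero.2 ho.symm⟩

lemma relCoords_ofRelCoords (z : EuclideanSpace ℝ (ι × κ)) : relCoords (ofRelCoords z) = z := by
  ext p
  simp [relCoords, ofRelCoords, extendNone]

lemma ofRelCoords_relCoords {f : ι × Option κ → ℝ} (h_nonneg : ∀ p, 0 ≤ f p)
    (h_zero : ∀ i, ∃ o, f (i, o) = 0) : ofRelCoords (relCoords f) = f := by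
  have h_min (i : ι) : blockMin (relCoords f) i = -f (i, none) := by
    obtain ⟨o, ho⟩ := h_zero i
    refine le_antisymm ?_ (le_inf' _ _ fun o' _ => ?_)
    · simpa [extendNone_relCoords, ho] using blockMin_le (relCoords f) i o
    · simpa [extendNone_relCoords] using h_nonneg (i, o')
  ext p
  simp [ofRelCoords, extendNone_relCoords, h_min]

lemma ofRelCoords_smul {t : ℝ} (ht : 0 ≤ t) (z : EuclideanSpace ℝ (ι × κ)) :
    ofRelCoords (t • z) = t • ofRelCoords z := by
  have h_ext (p : ι × Option κ) : extendNone (t • z) p = t * extendNone z p := by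
    obtain ⟨i, _ | k⟩ := p <;> simp [extendNone]
  have h_min (i : ι) : blockMin (t • z) i = t * blockMin z i := by
    simp only [blockMin, h_ext]
    exact (apply_inf'_eq_inf'_comp _ _ fun a b => mul_min_of_nonneg a b ht).symm
  ext p
  simp [ofRelCoords, h_ext, h_min, mul_sub]

lemma continuous_ofRelCoords :
    Continuous (ofRelCoords : EuclideanSpace ℝ (ι × κ) → ι × Option κ → ℝ) :=
  continuous_pi fun p => (continuous_extendNone p).sub <|
    Continuous.finset_inf'_apply _ fun o _ => continuous_extendNone (p.1, o)

variable [Fintype ι]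

lemma ofRelCoords_relCoords_realization (f : realization (simplexBoundaryJoin ι (Option κ))) :
    ofRelCoords (relCoords f.1) = f.1 :=
  ofRelCoords_relCoords f.2.1 ((exists_face_simplexBoundaryJoin_iff _).1 f.2.2.2)

def mass (z : EuclideanSpace ℝ (ι × κ)) : ℝ := ∑ p, ofRelCoords z p

lemma mass_smul {t : ℝ} (ht : 0 ≤ t) (z : EuclideanSpace ℝ (ι × κ)) :
    mass (t • z) = t * mass z := by
  simp [mass, ofRelCoords_smul ht, mul_sum]

lemma mass_pos {z : EuclideanSpace ℝ (ι × κ)} (hz : z ≠ 0) : 0 < mass z := by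
  refine (sum_nonneg fun p _ => ofRelCoords_nonneg z p).lt_of_ne fun h => hz ?_
  have h_zero : ofRelCoords z = 0 :=
    funext fun p => (sum_eq_zero_iff_of_nonneg fun p _ => ofRelCoords_nonneg z p).1 h.symm p
      (mem_univ p)
  rw [← relCoords_ofRelCoords z, h_zero]
  ext p
  simp [relCoords]

lemma mass_relCoords_realization (f : realization (simplexBoundaryJoin ι (Option κ))) :
    mass (relCoords f.1) = 1 := by
  rw [mass, ofRelCoords_relCoords_realization]
  exact f.2.2.1

lemma continuous_mass : Continuous (mass : EuclideanSpace ℝ (ι × κ) → ℝ) :=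
  continuous_finsetSum _ fun p _ => (continuous_apply p).comp continuous_ofRelCoords

def realizationHomeomorphMassOne :
    realization (simplexBoundaryJoin ι (Option κ)) ≃ₜ
      {z : EuclideanSpace ℝ (ι × κ) // mass z = 1} where
  toFun f := ⟨relCoords f.1, mass_relCoords_realization f⟩
  invFun z := ⟨ofRelCoords z.1, ofRelCoords_nonneg z.1, z.2,
    (exists_face_simplexBoundaryJoin_iff _).2 (exists_ofRelCoords_eq_zero z.1)⟩
  left_inv f := Subtype.ext (ofRelCoords_relCoords_realization f)
  right_inv z := Subtype.ext (relCoords_ofRelCoords z.1)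
  continuous_toFun := (continuous_relCoords.comp continuous_subtype_val).subtype_mk _
  continuous_invFun := (continuous_ofRelCoords.comp continuous_subtype_val).subtype_mk _

def realizationHomeomorphSphere :
    realization (simplexBoundaryJoin ι (Option κ)) ≃ₜ
      Metric.sphere (0 : EuclideanSpace ℝ (ι × κ)) 1 :=
  realizationHomeomorphMassOne.trans <| homeomorphSphereOfPosHomogeneous mass continuous_mass
    (fun _ ht z => mass_smul ht z) fun _ hz => mass_pos hz

end SimplexBoundaryJoin

namespace ClawedPath

open Finset

variable {n : ℕ}

def leaf (i : Fin (n + 1)) : Option Bool → Fin (n + 1) ⊕ Fin (n + 1) ⊕ Fin (n + 2)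
  | none => .inr (.inl i)
  | some false => .inr (.inr i.castSucc)
  | some true => .inr (.inr i.succ)

def edge (p : Fin (n + 1) × Option Bool) : Sym2 (Fin (n + 1) ⊕ Fin (n + 1) ⊕ Fin (n + 2)) :=
  s(.inl p.1, leaf p.1 p.2)

lemma edge_injective : Function.Injective (edge (n := n)) := by
  rintro ⟨i, o⟩ ⟨i', o'⟩ h
  simp only [edge, Sym2.eq_iff] at h
  rcases h with ⟨h1, h2⟩ | ⟨h1, h2⟩
  · cases h1
    rcases o with _ | _ | _ <;> rcases o' with _ | _ | _ <;> simp_all [leaf, Fin.ext_iff]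
  · rcases o with _ | _ | _ <;> simp [leaf] at h2

lemma mem_edgeSet_iff {e : Sym2 (Fin (n + 1) ⊕ Fin (n + 1) ⊕ Fin (n + 2))} :
    e ∈ (clawedPath n).edgeSet ↔ e ∈ Set.range edge := by
  induction e using Sym2.ind with
  | _ x y =>
    simp only [SimpleGraph.mem_edgeSet, clawedPath, SimpleGraph.fromRel_adj, Set.mem_range,
      Prod.exists, edge, Option.exists, Bool.exists_bool, leaf]
    rcases x with i | i | k <;> rcases y with j | j | l <;>
      simp <;> simp only [← and_or_left, exists_eq_left] <;> simp [Fin.ext_iff, eq_comm]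

lemma eq_of_mem_edge_of_mem_edge {v : Fin (n + 1) ⊕ Fin (n + 1) ⊕ Fin (n + 2)}
    {i i' : Fin (n + 1)} {o : Option Bool} (h : v ∈ edge (i, o)) (h' : v ∈ edge (i', o)) :
    i = i' := by
  rcases o with _ | _ | _ <;> simp only [edge, leaf, Sym2.mem_iff] at h h' <;>
    rcases h with rfl | rfl <;> simpa using h'

lemma inl_mem_edge {i : Fin (n + 1)} {p : Fin (n + 1) × Option Bool} :
    .inl i ∈ edge p ↔ p.1 = i := by
  obtain ⟨j, _ | _ | _⟩ := p <;> simp [edge, leaf, eq_comm]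

lemma exists_color_forall_notMem_edge {v : Fin (n + 1) ⊕ Fin (n + 1) ⊕ Fin (n + 2)}
    (hv : ∀ i, v ≠ .inl i) : ∃ c, ∀ i, v ∉ edge (i, c) := by
  rcases v with i | i | k
  · exact absurd rfl (hv i)
  · exact ⟨some false, fun j => by simp [edge, leaf]⟩
  · exact ⟨none, fun j => by simp [edge, leaf]⟩

def edgeEmbedding : Fin (n + 1) × Option Bool ↪ Sym2 (Fin (n + 1) ⊕ Fin (n + 1) ⊕ Fin (n + 2)) :=
  ⟨edge, edge_injective⟩

lemma card_filter_mem_map_edge_le_two {τ : Finset (Fin (n + 1) × Option Bool)}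
    {v : Fin (n + 1) ⊕ Fin (n + 1) ⊕ Fin (n + 2)} {c : Option Bool}
    (hc : ∀ p ∈ τ, v ∈ edge p → p.2 ≠ c) :
    #((τ.map edgeEmbedding).filter (v ∈ ·)) ≤ 2 := by
  classical
  -- at most one edge of each colour meets `v`, and none of colour `c` does
  rw [filter_map, card_map]
  calc #(τ.filter (v ∈ edgeEmbedding ·))
      ≤ #(univ.erase c) := card_le_card_of_injOn Prod.snd
        (fun p hp => mem_erase.2 ⟨hc p (mem_filter.1 hp).1 (mem_filter.1 hp).2, mem_univ _⟩)
        fun p hp q hq h => Prod.ext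
          (eq_of_mem_edge_of_mem_edge (mem_filter.1 hp).2 (h ▸ (mem_filter.1 hq).2)) h
    _ = 2 := by simp

lemma map_edgeEmbedding_mem_M2_iff (τ : Finset (Fin (n + 1) × Option Bool)) :
    τ.map edgeEmbedding ∈ (M2 (clawedPath n)).faces ↔
      τ ∈ (simplexBoundaryJoin (Fin (n + 1)) (Option Bool)).faces := by
  classical
  constructor
  · intro hτ i
    by_contra! h_all
    have h_three : 3 ≤ #((τ.map edgeEmbedding).filter (.inl i ∈ ·)) := by
      rw [filter_map, card_map]
      exact card_le_card_of_injOn (s := (univ : Finset (Option Bool))) (fun o => (i, o))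
        (fun o _ => mem_filter.2 ⟨h_all o, (inl_mem_edge (p := (i, o))).2 rfl⟩)
        fun o _ o' _ h => congrArg Prod.snd h
    exact absurd (h_three.trans (hτ.2 (.inl i))) (by norm_num)
  · intro hτ
    refine ⟨fun e he => ?_, fun v => ?_⟩
    · obtain ⟨p, -, rfl⟩ := mem_map.1 he
      exact mem_edgeSet_iff.2 ⟨p, rfl⟩
    · by_cases hv : ∃ i, v = .inl i
      · obtain ⟨i, rfl⟩ := hv
        obtain ⟨c, hc⟩ := hτ i
        refine card_filter_mem_map_edge_le_two (c := c) fun p hp hv h => hc ?_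
        rw [← inl_mem_edge.1 hv, ← h]
        exact hp
      · push Not at hv
        obtain ⟨c, hc⟩ := exists_color_forall_notMem_edge hv
        exact card_filter_mem_map_edge_le_two (c := c) fun p _ hvp h => hc p.1 (h ▸ hvp)

def realizationM2Homeomorph (n : ℕ) :
    realization (M2 (clawedPath n)) ≃ₜ
      realization (simplexBoundaryJoin (Fin (n + 1)) (Option Bool)) :=
  AbsSC.realizationHomeomorphOfEmbedding _ _ edgeEmbedding
    (fun _ hσ _ he => mem_edgeSet_iff.1 (hσ.1 he)) map_edgeEmbedding_mem_M2_iff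

end ClawedPath

/-- `M₂(CP_n) ≃ S^{2n+1}`. -/
theorem stmt_7 (n : ℕ) :
    Nonempty (ContinuousMap.HomotopyEquiv (realization (M2 (clawedPath n)))
      (sphereSpace (2 * n + 1))) := by
  have e : Fin (n + 1) × Bool ≃ Fin (2 * n + 1 + 1) := Fintype.equivFinOfCardEq (by simp; ring)
  exact ⟨((ClawedPath.realizationM2Homeomorph n).trans <|
    SimplexBoundaryJoin.realizationHomeomorphSphere.trans <|
      EuclideanSpace.sphereHomeomorphOfEquiv e).toHomotopyEquiv⟩

end
end

section
/- Let T be the number of claws and L the number of leaves of a clawed non-separable graph. Then T ≡ L (mod 2). -/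
noncomputable section

/-- A clawed graph: all degrees at most 3, and every edge has exactly one endpoint of
degree 3 (the center of its claw unit). -/
def IsClawedGraph {V : Type*} [Fintype V] [DecidableEq V] (G : SimpleGraph V)
    [DecidableRel G.Adj] : Prop :=
  (∀ v, G.degree v ≤ 3) ∧ ∀ e ∈ G.edgeSet, ∃! v, v ∈ e ∧ G.degree v = 3

/-- A non-separable (2-connected) graph: connected, and still connected after the
removal of any one vertex. -/
def NonSeparable {V : Type*} (G : SimpleGraph V) : Prop :=
  G.Connected ∧ ∀ v : V, (G.induce {w | w ≠ v}).Connected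

/-- in a clawed non-separable graph (a clawed graph whose non-leaf part,
the subdivided core, is non-separable), the number `T` of claws (degree-3 vertices)
and the number `L` of leaves (degree-1 vertices) have the same parity. -/
theorem stmt_11 {V : Type*} [Fintype V] [DecidableEq V] (G : SimpleGraph V)
    [DecidableRel G.Adj] (hG : IsClawedGraph G)
    (hns : NonSeparable (G.induce {v : V | G.degree v ≠ 1})) :
    (Finset.univ.filter fun v => G.degree v = 3).card % 2
      = (Finset.univ.filter fun v => G.degree v = 1).card % 2 := by
  have hodd : (Finset.univ.filter fun v => Odd (G.degree v))
      = (Finset.univ.filter fun v => G.degree v = 3)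
        ∪ (Finset.univ.filter fun v => G.degree v = 1) := by
    rw [← Finset.filter_or]
    apply Finset.filter_congr
    intro v _
    have h3 := hG.1 v
    rw [Nat.odd_iff]
    omega
  have hdisj : Disjoint (Finset.univ.filter fun v => G.degree v = 3)
      (Finset.univ.filter fun v => G.degree v = 1) := by
    rw [Finset.disjoint_filter]
    intro v _ h3 h1
    omega
  have heven := G.even_card_odd_degree_vertices
  rw [hodd, Finset.card_union_of_disjoint hdisj] at heven
  obtain ⟨k, hk⟩ := heven
  omega

end
end
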